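/- arXiv:1901.10625 — 3 statements merged into one kernel-verified Lean document; each statement's English description precedes it below -/
import Mathlib

section
/- (Lemma 2.1(iii)) Given two admissible 1D primitive states U⁻ and U⁺ with the HLLC wave speeds s⁻ = min(s_min(U⁻), s_min(U⁺)) and s⁺ = max(s_max(U⁻), s_max(U⁺)), the quantities A∓ and B∓ satisfy s⁻A⁻ - B⁻ > 0 and s⁺A⁺ - B⁺ > 0. -/
noncomputable section

namespace SRHD1D

/-- Lorentz factor `γ = (1 - u²)^(-1/2)`. -/
def lorentz (u : ℝ) : ℝ := 1 / Real.sqrt (1 - u ^ 2)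

/-- Specific enthalpy `h = 1 + Γ p / ((Γ - 1) ρ)` of a perfect gas. -/
def enthalpy (G r p : ℝ) : ℝ := 1 + G * p / ((G - 1) * r)

/-- Sound speed `c_s = √(Γ p / (ρ h))`. -/
def soundSpeed (G r p : ℝ) : ℝ := Real.sqrt (G * p / (r * enthalpy G r p))

/-- Conserved rest-mass density `D = ρ γ`. -/
def Dc (r u : ℝ) : ℝ := r * lorentz u

/-- Conserved momentum `m = ρ h γ² u`. -/
def mc (G r u p : ℝ) : ℝ := r * enthalpy G r p * lorentz u ^ 2 * u

/-- Conserved total energy `E = ρ h γ² - p`. -/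
def Ec (G r u p : ℝ) : ℝ := r * enthalpy G r p * lorentz u ^ 2 - p

/-- Minimum characteristic speed `s_min = (u - c_s)/(1 - c_s u)`. -/
def sMin (G r u p : ℝ) : ℝ := (u - soundSpeed G r p) / (1 - soundSpeed G r p * u)

/-- Maximum characteristic speed `s_max = (u + c_s)/(1 + c_s u)`. -/
def sMax (G r u p : ℝ) : ℝ := (u + soundSpeed G r p) / (1 + soundSpeed G r p * u)

lemma enthalpy_pos {G r p : ℝ} (hG : 1 < G) (hr : 0 < r) (hp : 0 < p) :
    0 < enthalpy G r p := by
  have h1 : 0 < G * p / ((G - 1) * r) :=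
    div_pos (mul_pos (by linarith) hp) (mul_pos (by linarith) hr)
  unfold enthalpy; linarith

lemma soundSpeed_nonneg (G r p : ℝ) : 0 ≤ soundSpeed G r p := Real.sqrt_nonneg _

lemma soundSpeed_lt_one {G r p : ℝ} (hG1 : 1 < G) (hG2 : G ≤ 2) (hr : 0 < r)
    (hp : 0 < p) : soundSpeed G r p < 1 := by
  have hh := enthalpy_pos hG1 hr hp
  have hd : 0 < r * enthalpy G r p := mul_pos hr hh
  have hx : G * p / (r * enthalpy G r p) < 1 := by
    rw [div_lt_one hd]
    have hG1' : (0:ℝ) < G - 1 := by linarith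
    have heq : r * enthalpy G r p = r + G * p / (G - 1) := by
      unfold enthalpy
      have hr' : r ≠ 0 := ne_of_gt hr
      have hG' : G - 1 ≠ 0 := ne_of_gt hG1'
      field_simp
    have h2 : G * p ≤ G * p / (G - 1) := by
      rw [le_div_iff₀ hG1']
      nlinarith [mul_nonneg (by linarith : (0:ℝ) ≤ 2 - G) (le_of_lt (mul_pos (by linarith : (0:ℝ) < G) hp))]
    rw [heq]; linarith
  unfold soundSpeed
  calc Real.sqrt (G * p / (r * enthalpy G r p)) < Real.sqrt 1 := by
        apply Real.sqrt_lt_sqrt (by positivity) hx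
    _ = 1 := Real.sqrt_one

lemma speed_bounds {c u : ℝ} (hc0 : 0 ≤ c) (hc1 : c < 1) (hu : |u| < 1) :
    (-1 < (u - c) / (1 - c * u) ∧ (u - c) / (1 - c * u) < 1) ∧
    (-1 < (u + c) / (1 + c * u) ∧ (u + c) / (1 + c * u) < 1) := by
  obtain ⟨hu1, hu2⟩ := abs_lt.mp hu
  have hcu : |c * u| < 1 := by
    rw [abs_mul, abs_of_nonneg hc0]
    calc c * |u| ≤ 1 * |u| := by nlinarith [abs_nonneg u]
      _ = |u| := one_mul _
      _ < 1 := hu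
  obtain ⟨hcu1, hcu2⟩ := abs_lt.mp hcu
  have hd1 : (0:ℝ) < 1 - c * u := by linarith
  have hd2 : (0:ℝ) < 1 + c * u := by linarith
  refine ⟨⟨?_, ?_⟩, ?_, ?_⟩
  · rw [lt_div_iff₀ hd1]; nlinarith
  · rw [div_lt_one hd1]; nlinarith
  · rw [lt_div_iff₀ hd2]; nlinarith
  · rw [div_lt_one hd2]; nlinarith

lemma key {G r u p : ℝ} (hG1 : 1 < G) (hr : 0 < r) (hu : |u| < 1) (hp : 0 < p)
    (s : ℝ) (hs : |s| < 1) :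
    0 < s * (s * Ec G r u p - mc G r u p) - (mc G r u p * (s - u) - p) := by
  set W := r * enthalpy G r p * lorentz u ^ 2 with hW
  have hu2 : u ^ 2 < 1 := by
    have := abs_lt.mp hu; nlinarith
  have hγ : 0 < lorentz u := by
    unfold lorentz
    have hs : 0 < Real.sqrt (1 - u ^ 2) := Real.sqrt_pos.mpr (by linarith)
    positivity
  have hWpos : 0 < W := by
    have := enthalpy_pos hG1 hr hp
    positivity
  have hs2 : s ^ 2 < 1 := by
    have := abs_lt.mp hs; nlinarith
  have hEc : Ec G r u p = W - p := rfl
  have hmc : mc G r u p = W * u := rfl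
  rw [hEc, hmc]
  have hid : s * (s * (W - p) - W * u) - (W * u * (s - u) - p)
      = W * (s - u) ^ 2 + p * (1 - s ^ 2) := by ring
  rw [hid]
  nlinarith [sq_nonneg (s - u)]

theorem hllc_sA_sub_B_pos (G r1 u1 p1 r2 u2 p2 sm sp A1 A2 B1 B2 : ℝ)
    (hG1 : 1 < G) (hG2 : G ≤ 2)
    (hr1 : 0 < r1) (hu1 : |u1| < 1) (hp1 : 0 < p1)
    (hr2 : 0 < r2) (hu2 : |u2| < 1) (hp2 : 0 < p2)
    (hsm : sm = min (sMin G r1 u1 p1) (sMin G r2 u2 p2))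
    (hsp : sp = max (sMax G r1 u1 p1) (sMax G r2 u2 p2))
    (hA1 : A1 = sm * Ec G r1 u1 p1 - mc G r1 u1 p1)
    (hA2 : A2 = sp * Ec G r2 u2 p2 - mc G r2 u2 p2)
    (hB1 : B1 = mc G r1 u1 p1 * (sm - u1) - p1)
    (hB2 : B2 = mc G r2 u2 p2 * (sp - u2) - p2)
    :
    0 < sm * A1 - B1 ∧ 0 < sp * A2 - B2 := by
  have hb1 := speed_bounds (soundSpeed_nonneg G r1 p1)
    (soundSpeed_lt_one hG1 hG2 hr1 hp1) hu1
  have hb2 := speed_bounds (soundSpeed_nonneg G r2 p2)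
    (soundSpeed_lt_one hG1 hG2 hr2 hp2) hu2
  have hmin1 : -1 < sMin G r1 u1 p1 ∧ sMin G r1 u1 p1 < 1 := hb1.1
  have hmin2 : -1 < sMin G r2 u2 p2 ∧ sMin G r2 u2 p2 < 1 := hb2.1
  have hmax1 : -1 < sMax G r1 u1 p1 ∧ sMax G r1 u1 p1 < 1 := hb1.2
  have hmax2 : -1 < sMax G r2 u2 p2 ∧ sMax G r2 u2 p2 < 1 := hb2.2
  have hsm' : |sm| < 1 := by
    rw [hsm, abs_lt]
    exact ⟨lt_min hmin1.1 hmin2.1, lt_of_le_of_lt (min_le_left _ _) hmin1.2⟩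
  have hsp' : |sp| < 1 := by
    rw [hsp, abs_lt]
    exact ⟨lt_of_lt_of_le hmax1.1 (le_max_left _ _), max_lt hmax1.2 hmax2.2⟩
  constructor
  · rw [hA1, hB1]; exact key hG1 hr1 hu1 hp1 sm hsm'
  · rw [hA2, hB2]; exact key hG1 hr2 hu2 hp2 sp hsp'

end SRHD1D
end
end

section
/- (Lemma 2.1(vii)) Given two admissible 1D primitive states U⁻ and U⁺ with the HLLC wave speeds s⁻ = min(s_min(U⁻), s_min(U⁺)) and s⁺ = max(s_max(U⁻), s_max(U⁺)), one has (A⁻)² - (B⁻)² - (D⁻)²(s⁻ - u⁻)² > 0 and (A⁺)² - (B⁺)² - (D⁺)²(s⁺ - u⁺)² > 0. -/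
/-! For a fixed state, `K(s) := (sE - m)² - (m(s - u) - p)² - D²(s - u)²` simplifies to
`(H² - 2Hp - ρ²)(s - u)² / (1 - u²) - p²(1 - s²)` with `H = ρh`, a convex quadratic in `s`.
It is negative at `s = u`. At `s = s_min`, the velocity `-c_s` boosted by `u`, it equals the
rest-frame value `(H² - 2Hp - ρ²)c_s² - p²(1 - c_s²)` times `(1 - u²)/(1 - c_s u)²`, and that value
is positive because `(Γ - 1)H = (Γ - 1)ρ + Γp`, `c_s²H = Γp` and `Γ ≤ 2`. Convexity then gives
`K(s) > 0` for every `s ≤ s_min < u`; the bound at `s_max` follows by the reflection `u ↦ -u`. -/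

noncomputable section

theorem one_sub_sq_pos_of_abs_lt_one {u : ℝ} (hu : |u| < 1) : 0 < 1 - u ^ 2 :=
  sub_pos.mpr ((sq_lt_one_iff_abs_lt_one u).mpr hu)

theorem pos_of_le_of_convex_quadratic {f : ℝ → ℝ} {a b c s t u : ℝ}
    (hf : ∀ x, f x = a * x ^ 2 + b * x + c) (ha : 0 ≤ a) (hst : s ≤ t) (htu : t < u)
    (ht : 0 < f t) (hu : f u ≤ 0) : 0 < f s := by
  have chord : (u - t) * f s
      = (u - s) * f t - (t - s) * f u + a * (u - t) * (t - s) * (u - s) := by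
    simp only [hf]
    ring
  have : 0 < (u - t) * f s := by
    rw [chord]
    have := mul_pos (by linarith : 0 < u - s) ht
    have := mul_nonneg (by linarith : 0 ≤ t - s) (neg_nonneg.mpr hu)
    have := mul_nonneg (mul_nonneg (mul_nonneg ha (by linarith : 0 ≤ u - t))
      (by linarith : 0 ≤ t - s)) (by linarith : 0 ≤ u - s)
    linarith
  exact pos_of_mul_pos_right this (by linarith)

theorem quadratic_form_at_velocity_sub {C P u c : ℝ} (hu : u ^ 2 ≠ 1) (hcu : c * u ≠ 1) :
    C / (1 - u ^ 2) * ((u - c) / (1 - c * u) - u) ^ 2 - P * (1 - ((u - c) / (1 - c * u)) ^ 2)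
      = (1 - u ^ 2) / (1 - c * u) ^ 2 * (C * c ^ 2 - P * (1 - c ^ 2)) := by
  have : 1 - u ^ 2 ≠ 0 := sub_ne_zero.mpr hu.symm
  have hcu : 1 - c * u ≠ 0 := sub_ne_zero.mpr hcu.symm
  rw [div_sub' hcu, div_pow, div_pow, one_sub_div (pow_ne_zero 2 hcu)]
  field_simp
  ring

theorem velocity_sub_lt_self {u c : ℝ} (hu : u ^ 2 < 1) (hc : 0 < c) (hcu : c * u < 1) :
    (u - c) / (1 - c * u) < u := by
  rw [div_lt_iff₀ (by linarith)]
  nlinarith [mul_pos hc (by linarith : 0 < 1 - u ^ 2)]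

namespace SRHD1D

section PerfectGas

variable {G r p H c : ℝ}

theorem perfectGas_coeff_pos (hG1 : 1 < G) (hG2 : G ≤ 2) (hr : 0 < r) (hp : 0 < p)
    (hH : (G - 1) * H = (G - 1) * r + G * p) : 0 < H ^ 2 - 2 * H * p - r ^ 2 := by
  have hG : 0 < G - 1 := by linarith
  have hH0 : 0 < H := by nlinarith
  have key : (G - 1) * (H ^ 2 - 2 * H * p - r ^ 2) = p * (G * r + (2 - G) * H) := by
    linear_combination (H + r) * hH
  have : 0 < p * (G * r + (2 - G) * H) := by
    have : 0 ≤ (2 - G) * H := mul_nonneg (by linarith) hH0.le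
    positivity
  exact pos_of_mul_pos_right (key ▸ this) hG.le

theorem perfectGas_coeff_mul_sq_sub_pos (hG1 : 1 < G) (hG2 : G ≤ 2) (hr : 0 < r) (hp : 0 < p)
    (hH : (G - 1) * H = (G - 1) * r + G * p) (hc : c ^ 2 * H = G * p) :
    0 < (H ^ 2 - 2 * H * p - r ^ 2) * c ^ 2 - p ^ 2 * (1 - c ^ 2) := by
  have hG : 0 < G - 1 := by linarith
  have h2G : 0 ≤ 2 - G := by linarith
  have hH0 : 0 < H := by nlinarith
  have key : (G - 1) ^ 2 * H * ((H ^ 2 - 2 * H * p - r ^ 2) * c ^ 2 - p ^ 2 * (1 - c ^ 2))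
      = p ^ 2 * ((G - 1) * (G + 1) * r + G * (2 - G) * p) := by
    linear_combination (G - 1) ^ 2 * ((H - p) ^ 2 - r ^ 2) * hc
      + ((G - 1) * G * p * H + (G - 1) * G * p * r + G ^ 2 * p ^ 2
        - (G - 1) * (2 * G + 1) * p ^ 2) * hH
  have : 0 < p ^ 2 * ((G - 1) * (G + 1) * r + G * (2 - G) * p) := by positivity
  exact pos_of_mul_pos_right (key ▸ this) (by positivity)

theorem perfectGas_sq_lt_one (hG1 : 1 < G) (hG2 : G ≤ 2) (hr : 0 < r) (hp : 0 < p)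
    (hH : (G - 1) * H = (G - 1) * r + G * p) (hc : c ^ 2 * H = G * p) : c ^ 2 < 1 := by
  have hH0 : 0 < H := by nlinarith
  have : G * p < H := by nlinarith
  nlinarith

end PerfectGas

/-- The quantity `A² - B² - D²(s - u)²` of the statement, for one state and one wave speed `s`. -/
def hllcK (G r u p s : ℝ) : ℝ :=
  (s * Ec G r u p - mc G r u p) ^ 2 - (mc G r u p * (s - u) - p) ^ 2 - Dc r u ^ 2 * (s - u) ^ 2

variable {G r u p s : ℝ}

theorem lorentz_sq (hu : |u| < 1) : lorentz u ^ 2 = (1 - u ^ 2)⁻¹ := by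
  have := one_sub_sq_pos_of_abs_lt_one hu
  rw [lorentz, one_div, inv_pow, Real.sq_sqrt this.le]

theorem sub_one_mul_mul_enthalpy (hG : 1 < G) (hr : 0 < r) :
    (G - 1) * (r * enthalpy G r p) = (G - 1) * r + G * p := by
  have : G - 1 ≠ 0 := by linarith
  rw [enthalpy]
  field_simp

theorem soundSpeed_sq_mul (hG : 1 < G) (hr : 0 < r) (hp : 0 ≤ p) :
    soundSpeed G r p ^ 2 * (r * enthalpy G r p) = G * p := by
  have hh : 0 < enthalpy G r p := by
    have : 0 ≤ G * p / ((G - 1) * r) := by positivity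
    rw [enthalpy]
    linarith
  rw [soundSpeed, Real.sq_sqrt (by positivity)]
  field_simp

theorem soundSpeed_pos (hG : 1 < G) (hr : 0 < r) (hp : 0 < p) : 0 < soundSpeed G r p := by
  have hsq := soundSpeed_sq_mul hG hr hp.le
  have : soundSpeed G r p ≠ 0 := by
    intro h0
    rw [h0] at hsq
    nlinarith [mul_pos (by linarith : (0 : ℝ) < G) hp]
  exact (Real.sqrt_nonneg _).lt_of_ne' this

theorem hllcK_eq (hu : |u| < 1) :
    hllcK G r u p s = ((r * enthalpy G r p) ^ 2 - 2 * (r * enthalpy G r p) * p - r ^ 2)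
      / (1 - u ^ 2) * (s - u) ^ 2 - p ^ 2 * (1 - s ^ 2) := by
  have := one_sub_sq_pos_of_abs_lt_one hu
  rw [hllcK, Ec, mc, Dc, mul_pow, lorentz_sq hu]
  field_simp [this.ne']
  ring

theorem hllcK_self_neg (hu : |u| < 1) (hp : 0 < p) : hllcK G r u p u < 0 := by
  have := one_sub_sq_pos_of_abs_lt_one hu
  rw [hllcK_eq hu, sub_self]
  nlinarith [mul_pos (pow_pos hp 2) this]

theorem soundSpeed_sq_lt_one (hG1 : 1 < G) (hG2 : G ≤ 2) (hr : 0 < r) (hp : 0 < p) :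
    soundSpeed G r p ^ 2 < 1 :=
  perfectGas_sq_lt_one hG1 hG2 hr hp (sub_one_mul_mul_enthalpy hG1 hr)
    (soundSpeed_sq_mul hG1 hr hp.le)

theorem soundSpeed_mul_lt_one (hG1 : 1 < G) (hG2 : G ≤ 2) (hr : 0 < r) (hu : |u| < 1)
    (hp : 0 < p) : soundSpeed G r p * u < 1 := by
  have hu2 := (sq_lt_one_iff_abs_lt_one u).mpr hu
  have hc2 := soundSpeed_sq_lt_one hG1 hG2 hr hp
  nlinarith [sq_nonneg (soundSpeed G r p - u)]

theorem sMin_lt_self (hG1 : 1 < G) (hG2 : G ≤ 2) (hr : 0 < r) (hu : |u| < 1) (hp : 0 < p) :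
    sMin G r u p < u :=
  velocity_sub_lt_self ((sq_lt_one_iff_abs_lt_one u).mpr hu) (soundSpeed_pos hG1 hr hp)
    (soundSpeed_mul_lt_one hG1 hG2 hr hu hp)

theorem hllcK_sMin_pos (hG1 : 1 < G) (hG2 : G ≤ 2) (hr : 0 < r) (hu : |u| < 1) (hp : 0 < p) :
    0 < hllcK G r u p (sMin G r u p) := by
  have hu2 := (sq_lt_one_iff_abs_lt_one u).mpr hu
  have hcu := soundSpeed_mul_lt_one hG1 hG2 hr hu hp
  rw [hllcK_eq hu, sMin, quadratic_form_at_velocity_sub hu2.ne hcu.ne]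
  exact mul_pos (div_pos (sub_pos.mpr hu2) (pow_pos (sub_pos.mpr hcu) 2))
    (perfectGas_coeff_mul_sq_sub_pos hG1 hG2 hr hp (sub_one_mul_mul_enthalpy hG1 hr)
      (soundSpeed_sq_mul hG1 hr hp.le))

theorem hllcK_pos_of_le_sMin (hG1 : 1 < G) (hG2 : G ≤ 2) (hr : 0 < r) (hu : |u| < 1)
    (hp : 0 < p) (hs : s ≤ sMin G r u p) : 0 < hllcK G r u p s := by
  set k := ((r * enthalpy G r p) ^ 2 - 2 * (r * enthalpy G r p) * p - r ^ 2) / (1 - u ^ 2)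
  have hk : 0 < k := div_pos
    (perfectGas_coeff_pos hG1 hG2 hr hp (sub_one_mul_mul_enthalpy hG1 hr))
    (one_sub_sq_pos_of_abs_lt_one hu)
  exact pos_of_le_of_convex_quadratic (a := k + p ^ 2) (b := -2 * k * u) (c := k * u ^ 2 - p ^ 2)
    (fun x => by rw [hllcK_eq hu]; ring) (by positivity) hs (sMin_lt_self hG1 hG2 hr hu hp)
    (hllcK_sMin_pos hG1 hG2 hr hu hp) (hllcK_self_neg hu hp).le

theorem hllcK_neg (G r u p s : ℝ) : hllcK G r (-u) p (-s) = hllcK G r u p s := by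
  simp only [hllcK, Ec, mc, Dc, lorentz, neg_sq]
  ring

theorem sMin_neg (G r u p : ℝ) : sMin G r (-u) p = -sMax G r u p := by
  rw [sMin, sMax]
  ring

theorem hllcK_pos_of_sMax_le (hG1 : 1 < G) (hG2 : G ≤ 2) (hr : 0 < r) (hu : |u| < 1)
    (hp : 0 < p) (hs : sMax G r u p ≤ s) : 0 < hllcK G r u p s := by
  rw [← hllcK_neg]
  exact hllcK_pos_of_le_sMin hG1 hG2 hr (by rwa [abs_neg]) hp (by rw [sMin_neg]; linarith)

theorem hllc_K_pos (G r1 u1 p1 r2 u2 p2 sm sp A1 A2 B1 B2 : ℝ)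
    (hG1 : 1 < G) (hG2 : G ≤ 2)
    (hr1 : 0 < r1) (hu1 : |u1| < 1) (hp1 : 0 < p1)
    (hr2 : 0 < r2) (hu2 : |u2| < 1) (hp2 : 0 < p2)
    (hsm : sm = min (sMin G r1 u1 p1) (sMin G r2 u2 p2))
    (hsp : sp = max (sMax G r1 u1 p1) (sMax G r2 u2 p2))
    (hA1 : A1 = sm * Ec G r1 u1 p1 - mc G r1 u1 p1)
    (hA2 : A2 = sp * Ec G r2 u2 p2 - mc G r2 u2 p2)
    (hB1 : B1 = mc G r1 u1 p1 * (sm - u1) - p1)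
    (hB2 : B2 = mc G r2 u2 p2 * (sp - u2) - p2)
    :
    0 < A1 ^ 2 - B1 ^ 2 - Dc r1 u1 ^ 2 * (sm - u1) ^ 2 ∧ 0 < A2 ^ 2 - B2 ^ 2 - Dc r2 u2 ^ 2 * (sp - u2) ^ 2 := by
  subst hA1 hA2 hB1 hB2
  exact ⟨hllcK_pos_of_le_sMin hG1 hG2 hr1 hu1 hp1 (hsm ▸ min_le_left _ _),
    hllcK_pos_of_sMax_le hG1 hG2 hr2 hu2 hp2 (hsp ▸ le_max_right _ _)⟩

end SRHD1D
end
end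

section
/- (Lemma 3.1(v), second part) Given two admissible 2D primitive states U⁻ and U⁺ (resolved along a common normal direction) with the HLLC wave speeds s⁻ = min(s_min(U⁻), s_min(U⁺)) and s⁺ = max(s_max(U⁻), s_max(U⁺)), if s* ∈ (-1,1) satisfies the contact-discontinuity relation (1 - s⁺s*)(s*A⁻ - B⁻) = (1 - s⁻s*)(s*A⁺ - B⁺), then s⁻ < s* < s⁺. -/
/-!
With `c_n := √(σ_s / (1 - u_n² + σ_s))` the extreme speeds are relativistic velocity sums,
`s_max, s_min = (u_n ± c_n) / (1 ± u_n c_n)`. For a perfect gas `Γ p = ρ h c_s²` and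
`c_s² < Γ - 1 ≤ 1`; together with `γ⁻² ≤ 1 - u_n²` this gives
`p (1 + c_n²) ≤ ρ h γ² c_n² (1 - u_n²)`. Put `N(a, b) = ρ h γ² (a - u_n)(b - u_n) + p (1 - a b)`,
so that `s* A - B = N(s, s*)`. After a boost to the fluid frame, that bound says `N(t, s) ≤ 0`
whenever `t ≥ s_max` and `s ≤ s_min`, while `N(a, b) > 0` when `a, b` lie on the same side of
`u_n`. So if `s* ≤ s⁻`, the contact relation `(1 - s⁺ s*) N⁻(s⁻, s*) = (1 - s⁻ s*) N⁺(s⁺, s*)`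
has a positive left side and a nonpositive right side; the case `s* ≥ s⁺` is symmetric.
-/

noncomputable section

namespace SRHD2D

/-- Lorentz factor `γ = (1 - u_n² - u_τ²)^(-1/2)`. -/
def lorentz (un ut : ℝ) : ℝ := 1 / Real.sqrt (1 - un ^ 2 - ut ^ 2)

/-- Specific enthalpy `h = 1 + Γ p / ((Γ - 1) ρ)` of a perfect gas. -/
def enthalpy (G r p : ℝ) : ℝ := 1 + G * p / ((G - 1) * r)

/-- Sound speed `c_s = √(Γ p / (ρ h))`. -/
def soundSpeed (G r p : ℝ) : ℝ := Real.sqrt (G * p / (r * enthalpy G r p))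

/-- Conserved rest-mass density `D = ρ γ`. -/
def Dc (r un ut : ℝ) : ℝ := r * lorentz un ut

/-- Normal momentum `m_n = ρ h γ² u_n`. -/
def mn (G r un ut p : ℝ) : ℝ := r * enthalpy G r p * lorentz un ut ^ 2 * un

/-- Tangential momentum `m_τ = ρ h γ² u_τ`. -/
def mt (G r un ut p : ℝ) : ℝ := r * enthalpy G r p * lorentz un ut ^ 2 * ut

/-- Conserved total energy `E = ρ h γ² - p`. -/
def Ec (G r un ut p : ℝ) : ℝ := r * enthalpy G r p * lorentz un ut ^ 2 - p

/-- `σ_s = c_s² / (γ² (1 - c_s²))`. -/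
def sigmaS (G r un ut p : ℝ) : ℝ :=
  soundSpeed G r p ^ 2 / (lorentz un ut ^ 2 * (1 - soundSpeed G r p ^ 2))

/-- Minimum normal characteristic speed. -/
def sMin (G r un ut p : ℝ) : ℝ :=
  (un - Real.sqrt (sigmaS G r un ut p * (1 - un ^ 2 + sigmaS G r un ut p))) /
    (1 + sigmaS G r un ut p)

/-- Maximum normal characteristic speed. -/
def sMax (G r un ut p : ℝ) : ℝ :=
  (un + Real.sqrt (sigmaS G r un ut p * (1 - un ^ 2 + sigmaS G r un ut p))) /
    (1 + sigmaS G r un ut p)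

def velAdd (a b : ℝ) : ℝ := (a + b) / (1 + a * b)

lemma mul_lt_one_of_abs_lt_one_of_abs_le_one {a b : ℝ} (ha : |a| < 1) (hb : |b| ≤ 1) :
    a * b < 1 :=
  (le_abs_self _).trans_lt <| by
    rw [abs_mul]; exact mul_lt_one_of_nonneg_of_lt_one_left (abs_nonneg a) ha hb

section VelAdd

variable {a b u c t s σ : ℝ}

lemma one_add_mul_pos (ha : |a| < 1) (hb : |b| < 1) : 0 < 1 + a * b := by
  have := mul_lt_one_of_abs_lt_one_of_abs_le_one ha (abs_neg b ▸ hb.le)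
  linarith [neg_mul_eq_mul_neg a b]

lemma abs_velAdd_lt_one (ha : |a| < 1) (hb : |b| < 1) : |velAdd a b| < 1 := by
  obtain ⟨ha₁, ha₂⟩ := abs_lt.1 ha
  obtain ⟨hb₁, hb₂⟩ := abs_lt.1 hb
  have hd := one_add_mul_pos ha hb
  rw [velAdd, abs_div, abs_of_pos hd, div_lt_one hd, abs_lt]
  constructor <;> nlinarith

lemma velAdd_sub_self (h : 1 + a * b ≠ 0) : velAdd a b - a = b * (1 - a ^ 2) / (1 + a * b) := by
  rw [velAdd, eq_div_iff h, sub_mul, div_mul_cancel₀ _ h]; ring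

lemma lt_velAdd_self (ha : |a| < 1) (hb : |b| < 1) (hb₀ : 0 < b) : a < velAdd a b := by
  have := sub_pos.2 ((sq_lt_one_iff_abs_lt_one a).2 ha)
  have hd := one_add_mul_pos ha hb
  rw [← sub_pos, velAdd_sub_self hd.ne']
  positivity

lemma velAdd_lt_self (ha : |a| < 1) (hb : |b| < 1) (hb₀ : b < 0) : velAdd a b < a := by
  have := sub_pos.2 ((sq_lt_one_iff_abs_lt_one a).2 ha)
  have hd := one_add_mul_pos ha hb
  rw [← sub_neg, velAdd_sub_self hd.ne']
  exact div_neg_of_neg_of_pos (mul_neg_of_neg_of_pos hb₀ this) hd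

lemma mul_one_sub_le_sub_of_velAdd_le (hd : 0 < 1 + u * c) (ht : velAdd u c ≤ t) :
    c * (1 - u * t) ≤ t - u := by
  rw [velAdd, div_le_iff₀ hd] at ht
  linarith

lemma mul_one_sub_le_sub_of_le_velAdd_neg (hd : 0 < 1 + u * -c) (hs : s ≤ velAdd u (-c)) :
    c * (1 - u * s) ≤ u - s := by
  rw [velAdd, le_div_iff₀ hd] at hs
  linarith

lemma velAdd_eq_div_of_sq_mul (hc : c ^ 2 * (1 - u ^ 2 + σ) = σ) (hd : 1 + u * c ≠ 0)
    (hσ : 1 + σ ≠ 0) : velAdd u c = (u + c * (1 - u ^ 2 + σ)) / (1 + σ) := by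
  rw [velAdd, div_eq_div_iff hd hσ]
  linear_combination (-u) * hc

end VelAdd

/-- In the rest frame of the fluid, `t` and `s` move with speeds `(t - u) / (1 - u t) ≥ c` and
`(u - s) / (1 - u s) ≥ c`. So `X = (t - u)(u - s) ≥ c² Y` for `Y = (1 - u t)(1 - u s)`, and the
claim follows from `(1 - u²)(1 - t s) = X + Y`. -/
lemma pressure_mul_le_of_outside_fan {W u p c t s : ℝ} (hu : |u| < 1) (hp : 0 ≤ p) (hc : 0 < c)
    (hpc : p * (1 + c ^ 2) ≤ W * c ^ 2 * (1 - u ^ 2)) (ht : u * t ≤ 1) (hs : u * s ≤ 1)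
    (hct : c * (1 - u * t) ≤ t - u) (hcs : c * (1 - u * s) ≤ u - s) :
    p * (1 - t * s) ≤ W * (t - u) * (u - s) := by
  have hu₂ : 0 < 1 - u ^ 2 := sub_pos.2 ((sq_lt_one_iff_abs_lt_one u).2 hu)
  have hY : 0 ≤ (1 - u * t) * (1 - u * s) := mul_nonneg (by linarith) (by linarith)
  have hXY : c ^ 2 * ((1 - u * t) * (1 - u * s)) ≤ (t - u) * (u - s) :=
    calc c ^ 2 * ((1 - u * t) * (1 - u * s)) = (c * (1 - u * t)) * (c * (1 - u * s)) := by ring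
      _ ≤ (t - u) * (u - s) := mul_le_mul hct hcs (by nlinarith) (by nlinarith)
  have hWp : p ≤ W * (1 - u ^ 2) :=
    le_of_mul_le_mul_left (by nlinarith : c ^ 2 * p ≤ c ^ 2 * (W * (1 - u ^ 2))) (by positivity)
  refine le_of_mul_le_mul_left ?_ hu₂
  linarith [mul_le_mul_of_nonneg_left hXY (sub_nonneg.2 hWp), mul_le_mul_of_nonneg_right hpc hY]

lemma hllc_numerator_pos {W u p s x : ℝ} (hW : 0 ≤ W) (hp : 0 < p) (h : 0 ≤ (s - u) * (x - u))
    (hsx : s * x < 1) : 0 < W * (s - u) * (x - u) + p * (1 - s * x) := by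
  have := mul_nonneg hW h
  have := mul_pos hp (sub_pos.2 hsx)
  rw [mul_assoc]; linarith

section SqrtDiv

variable {a σ u : ℝ}

lemma sqrt_div_add_lt_one (ha : 0 < a) (hσ : 0 ≤ σ) : √(σ / (a + σ)) < 1 := by
  rw [Real.sqrt_lt' one_pos, one_pow, div_lt_one (by linarith)]
  linarith

lemma sq_sqrt_div_add_mul (ha : 0 < a) (hσ : 0 ≤ σ) :
    √(σ / (a + σ)) ^ 2 * (a + σ) = σ := by
  rw [Real.sq_sqrt (by positivity), div_mul_cancel₀ _ (by positivity)]

lemma sqrt_mul_add_eq (ha : 0 < a) (hσ : 0 ≤ σ) :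
    √(σ * (a + σ)) = √(σ / (a + σ)) * (a + σ) := by
  rw [Real.sqrt_eq_iff_mul_self_eq (by positivity) (by positivity)]
  linear_combination (a + σ) * (sq_sqrt_div_add_mul ha hσ).symm

lemma add_sqrt_div_eq_velAdd (hu : |u| < 1) (hσ : 0 ≤ σ) :
    (u + √(σ * (1 - u ^ 2 + σ))) / (1 + σ) = velAdd u √(σ / (1 - u ^ 2 + σ)) := by
  have ha := sub_pos.2 ((sq_lt_one_iff_abs_lt_one u).2 hu)
  have hc : |√(σ / (1 - u ^ 2 + σ))| < 1 := by
    rw [abs_of_nonneg (Real.sqrt_nonneg _)]; exact sqrt_div_add_lt_one ha hσ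
  rw [velAdd_eq_div_of_sq_mul (sq_sqrt_div_add_mul ha hσ) (one_add_mul_pos hu hc).ne'
    (by positivity), sqrt_mul_add_eq ha hσ]

lemma sub_sqrt_div_eq_velAdd (hu : |u| < 1) (hσ : 0 ≤ σ) :
    (u - √(σ * (1 - u ^ 2 + σ))) / (1 + σ) = velAdd u (-√(σ / (1 - u ^ 2 + σ))) := by
  have ha := sub_pos.2 ((sq_lt_one_iff_abs_lt_one u).2 hu)
  have hc : |-√(σ / (1 - u ^ 2 + σ))| < 1 := by
    rw [abs_neg, abs_of_nonneg (Real.sqrt_nonneg _)]; exact sqrt_div_add_lt_one ha hσ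
  rw [velAdd_eq_div_of_sq_mul (by rw [neg_sq]; exact sq_sqrt_div_add_mul ha hσ)
    (one_add_mul_pos hu hc).ne' (by positivity), sqrt_mul_add_eq ha hσ, neg_mul,
    ← sub_eq_add_neg]

end SqrtDiv

def labEnthalpy (G r un ut p : ℝ) : ℝ := r * enthalpy G r p * lorentz un ut ^ 2

def normalSoundSpeed (G r un ut p : ℝ) : ℝ :=
  √(sigmaS G r un ut p / (1 - un ^ 2 + sigmaS G r un ut p))

section State

variable {G r un ut p : ℝ}

lemma abs_lt_one_of_sq_add_sq_lt_one (hu : un ^ 2 + ut ^ 2 < 1) : |un| < 1 :=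
  (sq_lt_one_iff_abs_lt_one un).1 (by nlinarith [sq_nonneg ut])

lemma enthalpy_pos (hG : 1 < G) (hr : 0 < r) (hp : 0 < p) : 0 < enthalpy G r p := by
  have : 0 < G * p / ((G - 1) * r) := by apply div_pos <;> nlinarith
  rw [enthalpy]; linarith

lemma lorentz_sq_mul (hu : un ^ 2 + ut ^ 2 < 1) :
    lorentz un ut ^ 2 * (1 - un ^ 2 - ut ^ 2) = 1 := by
  rw [lorentz, div_pow, Real.sq_sqrt (by linarith), one_pow, one_div_mul_cancel (by linarith)]

lemma labEnthalpy_pos (hG : 1 < G) (hr : 0 < r) (hp : 0 < p) (hu : un ^ 2 + ut ^ 2 < 1) :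
    0 < labEnthalpy G r un ut p := by
  have : 0 < lorentz un ut ^ 2 :=
    pos_of_mul_pos_left (by rw [lorentz_sq_mul hu]; exact one_pos) (by linarith)
  have := enthalpy_pos hG hr hp
  rw [labEnthalpy]; positivity

lemma soundSpeed_sq_mul (hG : 1 < G) (hr : 0 < r) (hp : 0 < p) :
    soundSpeed G r p ^ 2 * (r * enthalpy G r p) = G * p := by
  have := enthalpy_pos hG hr hp
  rw [soundSpeed, Real.sq_sqrt (by positivity), div_mul_cancel₀ _ (by positivity)]

lemma soundSpeed_sq_pos (hG : 1 < G) (hr : 0 < r) (hp : 0 < p) : 0 < soundSpeed G r p ^ 2 := by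
  have := enthalpy_pos hG hr hp
  have := soundSpeed_sq_mul hG hr hp
  exact pos_of_mul_pos_left (by rw [this]; nlinarith) (by positivity)

lemma soundSpeed_sq_lt (hG : 1 < G) (hr : 0 < r) (hp : 0 < p) :
    soundSpeed G r p ^ 2 < G - 1 := by
  have := enthalpy_pos hG hr hp
  have hrh : (G - 1) * (r * enthalpy G r p) = (G - 1) * r + G * p := by
    rw [enthalpy]; field_simp [show G - 1 ≠ 0 by linarith]
  refine lt_of_mul_lt_mul_right ?_ (by positivity : 0 ≤ r * enthalpy G r p)
  rw [soundSpeed_sq_mul hG hr hp, hrh]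
  nlinarith

lemma soundSpeed_sq_lt_one (hG : 1 < G) (hG₂ : G ≤ 2) (hr : 0 < r) (hp : 0 < p) :
    soundSpeed G r p ^ 2 < 1 := by
  linarith [soundSpeed_sq_lt hG hr hp]

lemma sigmaS_mul_one_sub (hu : un ^ 2 + ut ^ 2 < 1) (hq : soundSpeed G r p ^ 2 < 1) :
    sigmaS G r un ut p * (1 - soundSpeed G r p ^ 2) =
      soundSpeed G r p ^ 2 * (1 - un ^ 2 - ut ^ 2) := by
  have hγ := lorentz_sq_mul hu
  rw [sigmaS]
  generalize lorentz un ut ^ 2 = g at hγ ⊢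
  generalize soundSpeed G r p ^ 2 = q at hq ⊢
  field_simp [left_ne_zero_of_mul_eq_one hγ, show 1 - q ≠ 0 by linarith]
  linear_combination (-q) * hγ

lemma sigmaS_pos (hG : 1 < G) (hG₂ : G ≤ 2) (hr : 0 < r) (hp : 0 < p)
    (hu : un ^ 2 + ut ^ 2 < 1) : 0 < sigmaS G r un ut p := by
  have hq := soundSpeed_sq_lt_one hG hG₂ hr hp
  have : 0 < sigmaS G r un ut p * (1 - soundSpeed G r p ^ 2) := by
    rw [sigmaS_mul_one_sub hu hq]; exact mul_pos (soundSpeed_sq_pos hG hr hp) (by linarith)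
  exact pos_of_mul_pos_left this (by linarith)

lemma labEnthalpy_mul_sigmaS (hG : 1 < G) (hG₂ : G ≤ 2) (hr : 0 < r) (hp : 0 < p)
    (hu : un ^ 2 + ut ^ 2 < 1) :
    labEnthalpy G r un ut p * sigmaS G r un ut p * (1 - soundSpeed G r p ^ 2) = G * p := by
  rw [mul_assoc, sigmaS_mul_one_sub hu (soundSpeed_sq_lt_one hG hG₂ hr hp),
    ← soundSpeed_sq_mul hG hr hp, labEnthalpy]
  linear_combination soundSpeed G r p ^ 2 * r * enthalpy G r p * lorentz_sq_mul hu

lemma pressure_mul_le_labEnthalpy (hG : 1 < G) (hG₂ : G ≤ 2) (hr : 0 < r) (hp : 0 < p)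
    (hu : un ^ 2 + ut ^ 2 < 1) :
    p * (1 - un ^ 2 + 2 * sigmaS G r un ut p) ≤
      labEnthalpy G r un ut p * sigmaS G r un ut p * (1 - un ^ 2) := by
  have hW := labEnthalpy_mul_sigmaS hG hG₂ hr hp hu
  have hσ := sigmaS_mul_one_sub hu (soundSpeed_sq_lt_one hG hG₂ hr hp)
  have hq := soundSpeed_sq_lt hG hr hp
  have hq₀ := soundSpeed_sq_pos hG hr hp
  have hWσ : 0 < labEnthalpy G r un ut p * sigmaS G r un ut p :=
    mul_pos (labEnthalpy_pos hG hr hp hu) (sigmaS_pos hG hG₂ hr hp hu)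
  have hu₂ : 0 ≤ 1 - un ^ 2 := by nlinarith [sq_nonneg ut]
  set W := labEnthalpy G r un ut p
  set σ := sigmaS G r un ut p
  set q := soundSpeed G r p ^ 2
  refine le_of_mul_le_mul_left ?_ (by linarith : 0 < G)
  calc G * (p * (1 - un ^ 2 + 2 * σ))
      = W * σ * ((1 - q) * (1 - un ^ 2) + 2 * q * (1 - un ^ 2 - ut ^ 2)) := by
        linear_combination (-(1 - un ^ 2 + 2 * σ)) * hW + 2 * W * σ * hσ
    _ ≤ W * σ * ((1 + q) * (1 - un ^ 2)) := by
        gcongr; nlinarith [sq_nonneg ut]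
    _ ≤ G * (W * σ * (1 - un ^ 2)) := by
        nlinarith [mul_nonneg hWσ.le hu₂]

lemma normalSoundSpeed_pos (hG : 1 < G) (hG₂ : G ≤ 2) (hr : 0 < r) (hp : 0 < p)
    (hu : un ^ 2 + ut ^ 2 < 1) : 0 < normalSoundSpeed G r un ut p := by
  have hσ := sigmaS_pos hG hG₂ hr hp hu
  rw [normalSoundSpeed, Real.sqrt_pos]
  exact div_pos hσ (by nlinarith [sq_nonneg ut])

lemma abs_normalSoundSpeed_lt_one (hG : 1 < G) (hG₂ : G ≤ 2) (hr : 0 < r) (hp : 0 < p)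
    (hu : un ^ 2 + ut ^ 2 < 1) : |normalSoundSpeed G r un ut p| < 1 := by
  rw [abs_of_pos (normalSoundSpeed_pos hG hG₂ hr hp hu)]
  exact sqrt_div_add_lt_one (by nlinarith [sq_nonneg ut]) (sigmaS_pos hG hG₂ hr hp hu).le

lemma pressure_mul_le_normalSoundSpeed (hG : 1 < G) (hG₂ : G ≤ 2) (hr : 0 < r) (hp : 0 < p)
    (hu : un ^ 2 + ut ^ 2 < 1) :
    p * (1 + normalSoundSpeed G r un ut p ^ 2) ≤
      labEnthalpy G r un ut p * normalSoundSpeed G r un ut p ^ 2 * (1 - un ^ 2) := by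
  have ha : 0 < 1 - un ^ 2 := by nlinarith [sq_nonneg ut]
  have hσ := sigmaS_pos hG hG₂ hr hp hu
  have hc : normalSoundSpeed G r un ut p ^ 2 * (1 - un ^ 2 + sigmaS G r un ut p) =
      sigmaS G r un ut p := sq_sqrt_div_add_mul ha hσ.le
  refine le_of_mul_le_mul_right ?_ (by positivity : 0 < 1 - un ^ 2 + sigmaS G r un ut p)
  linear_combination pressure_mul_le_labEnthalpy hG hG₂ hr hp hu +
    (p - labEnthalpy G r un ut p * (1 - un ^ 2)) * hc

lemma sMax_eq_velAdd (hG : 1 < G) (hG₂ : G ≤ 2) (hr : 0 < r) (hp : 0 < p)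
    (hu : un ^ 2 + ut ^ 2 < 1) :
    sMax G r un ut p = velAdd un (normalSoundSpeed G r un ut p) :=
  add_sqrt_div_eq_velAdd (abs_lt_one_of_sq_add_sq_lt_one hu) (sigmaS_pos hG hG₂ hr hp hu).le

lemma sMin_eq_velAdd (hG : 1 < G) (hG₂ : G ≤ 2) (hr : 0 < r) (hp : 0 < p)
    (hu : un ^ 2 + ut ^ 2 < 1) :
    sMin G r un ut p = velAdd un (-normalSoundSpeed G r un ut p) :=
  sub_sqrt_div_eq_velAdd (abs_lt_one_of_sq_add_sq_lt_one hu) (sigmaS_pos hG hG₂ hr hp hu).le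

lemma neg_one_lt_sMin_lt_un_lt_sMax_lt_one (hG : 1 < G) (hG₂ : G ≤ 2) (hr : 0 < r) (hp : 0 < p)
    (hu : un ^ 2 + ut ^ 2 < 1) :
    -1 < sMin G r un ut p ∧ sMin G r un ut p < un ∧ un < sMax G r un ut p ∧
      sMax G r un ut p < 1 := by
  have hun := abs_lt_one_of_sq_add_sq_lt_one hu
  have hc₀ := normalSoundSpeed_pos hG hG₂ hr hp hu
  have hc := abs_normalSoundSpeed_lt_one hG hG₂ hr hp hu
  have hc' : |-normalSoundSpeed G r un ut p| < 1 := by rwa [abs_neg]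
  rw [sMin_eq_velAdd hG hG₂ hr hp hu, sMax_eq_velAdd hG hG₂ hr hp hu]
  exact ⟨(abs_lt.1 (abs_velAdd_lt_one hun hc')).1, velAdd_lt_self hun hc' (neg_lt_zero.2 hc₀),
    lt_velAdd_self hun hc hc₀, (abs_lt.1 (abs_velAdd_lt_one hun hc)).2⟩

lemma hllc_numerator_eq (G r un ut p s x : ℝ) :
    x * (s * Ec G r un ut p - mn G r un ut p) - (mn G r un ut p * (s - un) - p) =
      labEnthalpy G r un ut p * (s - un) * (x - un) + p * (1 - s * x) := by
  simp only [Ec, mn, labEnthalpy]; ring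

lemma hllc_numerator_nonpos {t s : ℝ} (hG : 1 < G) (hG₂ : G ≤ 2) (hr : 0 < r) (hp : 0 < p)
    (hu : un ^ 2 + ut ^ 2 < 1) (ht : sMax G r un ut p ≤ t) (ht₁ : |t| ≤ 1)
    (hs : s ≤ sMin G r un ut p) (hs₁ : |s| ≤ 1) :
    labEnthalpy G r un ut p * (t - un) * (s - un) + p * (1 - t * s) ≤ 0 := by
  have hun := abs_lt_one_of_sq_add_sq_lt_one hu
  have hc := abs_normalSoundSpeed_lt_one hG hG₂ hr hp hu
  have hc' : |-normalSoundSpeed G r un ut p| < 1 := by rwa [abs_neg]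
  rw [sMax_eq_velAdd hG hG₂ hr hp hu] at ht
  rw [sMin_eq_velAdd hG hG₂ hr hp hu] at hs
  have := pressure_mul_le_of_outside_fan hun hp.le (normalSoundSpeed_pos hG hG₂ hr hp hu)
    (pressure_mul_le_normalSoundSpeed hG hG₂ hr hp hu)
    (mul_lt_one_of_abs_lt_one_of_abs_le_one hun ht₁).le
    (mul_lt_one_of_abs_lt_one_of_abs_le_one hun hs₁).le
    (mul_one_sub_le_sub_of_velAdd_le (one_add_mul_pos hun hc) ht)
    (mul_one_sub_le_sub_of_le_velAdd_neg (one_add_mul_pos hun hc') hs)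
  linear_combination this

end State

theorem hllc2d_contact_speed_bounds (G r1 un1 ut1 p1 r2 un2 ut2 p2 sm sp A1 A2 B1 B2 sstar : ℝ)
    (hG1 : 1 < G) (hG2 : G ≤ 2)
    (hr1 : 0 < r1) (hu1 : un1 ^ 2 + ut1 ^ 2 < 1) (hp1 : 0 < p1)
    (hr2 : 0 < r2) (hu2 : un2 ^ 2 + ut2 ^ 2 < 1) (hp2 : 0 < p2)
    (hsm : sm = min (sMin G r1 un1 ut1 p1) (sMin G r2 un2 ut2 p2))
    (hsp : sp = max (sMax G r1 un1 ut1 p1) (sMax G r2 un2 ut2 p2))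
    (hA1 : A1 = sm * Ec G r1 un1 ut1 p1 - mn G r1 un1 ut1 p1)
    (hA2 : A2 = sp * Ec G r2 un2 ut2 p2 - mn G r2 un2 ut2 p2)
    (hB1 : B1 = mn G r1 un1 ut1 p1 * (sm - un1) - p1)
    (hB2 : B2 = mn G r2 un2 ut2 p2 * (sp - un2) - p2)
    (hs1 : -1 < sstar) (hs2 : sstar < 1)
    (hrel : (1 - sp * sstar) * (sstar * A1 - B1) = (1 - sm * sstar) * (sstar * A2 - B2))
    :
    sm < sstar ∧ sstar < sp := by
  obtain ⟨hm₁, hmu₁, hMu₁, hM₁⟩ :=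
    neg_one_lt_sMin_lt_un_lt_sMax_lt_one hG1 hG2 hr1 hp1 hu1
  obtain ⟨hm₂, hmu₂, hMu₂, hM₂⟩ :=
    neg_one_lt_sMin_lt_un_lt_sMax_lt_one hG1 hG2 hr2 hp2 hu2
  have hsm₁ : sm ≤ sMin G r1 un1 ut1 p1 := hsm ▸ min_le_left _ _
  have hsm₂ : sm ≤ sMin G r2 un2 ut2 p2 := hsm ▸ min_le_right _ _
  have hsp₁ : sMax G r1 un1 ut1 p1 ≤ sp := hsp ▸ le_max_left _ _
  have hsp₂ : sMax G r2 un2 ut2 p2 ≤ sp := hsp ▸ le_max_right _ _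
  have hsm_abs : |sm| < 1 := abs_lt.2 ⟨hsm ▸ lt_min hm₁ hm₂, by linarith⟩
  have hsp_abs : |sp| < 1 := abs_lt.2 ⟨by linarith, hsp ▸ max_lt hM₁ hM₂⟩
  have hstar : |sstar| < 1 := abs_lt.2 ⟨hs1, hs2⟩
  have hsm_star := sub_pos.2 (mul_lt_one_of_abs_lt_one_of_abs_le_one hsm_abs hstar.le)
  have hsp_star := sub_pos.2 (mul_lt_one_of_abs_lt_one_of_abs_le_one hsp_abs hstar.le)
  rw [hA1, hA2, hB1, hB2, hllc_numerator_eq, hllc_numerator_eq] at hrel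
  constructor
  · by_contra! h
    have N₁ := hllc_numerator_pos (labEnthalpy_pos hG1 hr1 hp1 hu1).le hp1
      (mul_nonneg_of_nonpos_of_nonpos (by linarith : sm - un1 ≤ 0) (by linarith))
      (sub_pos.1 hsm_star)
    have N₂ :=
      hllc_numerator_nonpos hG1 hG2 hr2 hp2 hu2 hsp₂ hsp_abs.le (h.trans hsm₂) hstar.le
    linarith [mul_pos hsp_star N₁, mul_nonpos_of_nonneg_of_nonpos hsm_star.le N₂]
  · by_contra! h
    have N₁ :=
      hllc_numerator_nonpos hG1 hG2 hr1 hp1 hu1 (hsp₁.trans h) hstar.le hsm₁ hsm_abs.le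
    have N₂ := hllc_numerator_pos (labEnthalpy_pos hG1 hr2 hp2 hu2).le hp2
      (mul_nonneg (by linarith : 0 ≤ sp - un2) (by linarith)) (sub_pos.1 hsp_star)
    linarith [mul_nonpos_of_nonneg_of_nonpos hsp_star.le N₁, mul_pos hsm_star N₂]

end SRHD2D
end
end
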